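/- Let E be a finite-dimensional real inner product space, A : E → E a symmetric (self-adjoint) linear operator, and D ⊆ E a linear subspace satisfying the Gauss-invariance condition for A. Suppose X₁ ∈ D with ‖X₁‖ = 1, that A X₁ − λ₁ X₁ ∈ D^⊥ for some real number λ₁ ≠ 0, and that A X₁ ∉ D. Then A W = 0 for every W ∈ D with ⟨W, X₁⟩ = 0; consequently D ∩ ker A = {W ∈ D : ⟨W, X₁⟩ = 0}. -/

import Mathlib

open scoped RealInnerProductSpace

/-!
For `W ∈ D` orthogonal to `X₁`, symmetry of `A` and `A X₁ - λ₁ X₁ ⊥ D` give `⟪A W, X₁⟫ = 0`,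
while `⟪A X₁, X₁⟫ = λ₁ ≠ 0`. The Gauss condition for `(X₁, W, X₁)` then puts `A W` in `D`, and the
Gauss condition for `(X₁, W, Z)` puts `⟪A W, Z⟫ • A X₁` in `D` for every `Z ∈ D`; since `A X₁ ∉ D`,
`A W` is orthogonal to `D`, in particular to itself.
-/

section

variable {E : Type*} [NormedAddCommGroup E] [InnerProductSpace ℝ E]

namespace Submodule

def IsGaussInvariant (A : E →ₗ[ℝ] E) (D : Submodule ℝ E) : Prop :=
  ∀ X ∈ D, ∀ Y ∈ D, ∀ Z ∈ D, ⟪A Y, Z⟫ • A X - ⟪A X, Z⟫ • A Y ∈ D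

namespace IsGaussInvariant

variable {A : E →ₗ[ℝ] E} {D : Submodule ℝ E} {X Y : E}

theorem apply_mem_of_inner_eq_zero (hG : D.IsGaussInvariant A) (hX : X ∈ D) (hY : Y ∈ D)
    (hYX : ⟪A Y, X⟫ = 0) (hXX : ⟪A X, X⟫ ≠ 0) : A Y ∈ D := by
  have h := hG X hX Y hY X hX
  rw [hYX, zero_smul, zero_sub, neg_mem_iff] at h
  exact (smul_mem_iff D hXX).1 h

theorem inner_eq_zero_of_apply_notMem (hG : D.IsGaussInvariant A) (hX : X ∈ D) (hY : Y ∈ D)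
    (hAX : A X ∉ D) (hAY : A Y ∈ D) {Z : E} (hZ : Z ∈ D) : ⟪A Y, Z⟫ = 0 := by
  by_contra hne
  have h : ⟪A Y, Z⟫ • A X ∈ D := by
    simpa using D.add_mem (hG X hX Y hY Z hZ) (D.smul_mem ⟪A X, Z⟫ hAY)
  exact hAX ((smul_mem_iff D hne).1 h)

theorem apply_eq_zero_of_apply_notMem (hG : D.IsGaussInvariant A) (hX : X ∈ D) (hY : Y ∈ D)
    (hAX : A X ∉ D) (hAY : A Y ∈ D) : A Y = 0 :=
  inner_self_eq_zero.mp (hG.inner_eq_zero_of_apply_notMem hX hY hAX hAY hAY)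

end IsGaussInvariant

end Submodule

theorem LinearMap.IsSymmetric.inner_apply_eq_mul_inner_of_sub_smul_mem_orthogonal
    {A : E →ₗ[ℝ] E} (hA : A.IsSymmetric) {D : Submodule ℝ E} {x : E} {l : ℝ}
    (hV : A x - l • x ∈ Dᗮ) {W : E} (hW : W ∈ D) : ⟪A W, x⟫ = l * ⟪W, x⟫ := by
  have h := Submodule.inner_right_of_mem_orthogonal hW hV
  rw [inner_sub_right, inner_smul_right, sub_eq_zero] at h
  rw [hA, h]

end

theorem gauss_invariant_kernel_general
    {E : Type*} [NormedAddCommGroup E] [InnerProductSpace ℝ E]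
    (A : E →ₗ[ℝ] E)
    (hA : ∀ u v : E, ⟪A u, v⟫ = ⟪u, A v⟫)
    (D : Submodule ℝ E)
    (hGauss : ∀ X ∈ D, ∀ Y ∈ D, ∀ Z ∈ D,
      ⟪A Y, Z⟫ • A X - ⟪A X, Z⟫ • A Y ∈ D)
    (X₁ : E) (hX₁ : X₁ ∈ D) (hX₁norm : ‖X₁‖ = 1)
    (l₁ : ℝ) (hl₁ : l₁ ≠ 0) (hV₁ : A X₁ - l₁ • X₁ ∈ Dᗮ)
    (hAX₁ : A X₁ ∉ D) :
    (∀ W ∈ D, ⟪W, X₁⟫ = 0 → A W = 0) ∧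
      (∀ W : E, W ∈ D ⊓ LinearMap.ker A ↔ W ∈ D ∧ ⟪W, X₁⟫ = 0) := by
  have hG : D.IsGaussInvariant A := hGauss
  have hpair : ∀ W ∈ D, ⟪A W, X₁⟫ = l₁ * ⟪W, X₁⟫ := fun W hW =>
    LinearMap.IsSymmetric.inner_apply_eq_mul_inner_of_sub_smul_mem_orthogonal hA hV₁ hW
  have hX₁X₁ : ⟪A X₁, X₁⟫ ≠ 0 := by
    rw [hpair X₁ hX₁, real_inner_self_eq_norm_sq, hX₁norm, one_pow, mul_one]
    exact hl₁
  have hker : ∀ W ∈ D, ⟪W, X₁⟫ = 0 → A W = 0 := fun W hW hWX =>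
    hG.apply_eq_zero_of_apply_notMem hX₁ hW hAX₁ <|
      hG.apply_mem_of_inner_eq_zero hX₁ hW (by rw [hpair W hW, hWX, mul_zero]) hX₁X₁
  refine ⟨hker, fun W => ⟨fun ⟨hW, hAW⟩ => ⟨hW, ?_⟩, fun ⟨hW, hWX⟩ => ⟨hW, hker W hW hWX⟩⟩⟩
  have h := hpair W hW
  rw [LinearMap.mem_ker.mp hAW, inner_zero_left] at h
  exact (mul_eq_zero.mp h.symm).resolve_left hl₁

/-- If `D` is Gauss-invariant for a symmetric operator `A`, `X₁ ∈ D` is a unit vector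
with `A X₁ - λ₁ X₁ ∈ D^⊥`, `λ₁ ≠ 0`, and `A X₁ ∉ D`, then `A W = 0` for every
`W ∈ D` orthogonal to `X₁`; consequently `D ∩ ker A = {W ∈ D : ⟪W, X₁⟫ = 0}`. -/
theorem gauss_invariant_kernel
    {E : Type*} [NormedAddCommGroup E] [InnerProductSpace ℝ E]
    [FiniteDimensional ℝ E] (A : E →ₗ[ℝ] E)
    (hA : ∀ u v : E, ⟪A u, v⟫ = ⟪u, A v⟫)
    (D : Submodule ℝ E)
    (hGauss : ∀ X ∈ D, ∀ Y ∈ D, ∀ Z ∈ D,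
      ⟪A Y, Z⟫ • A X - ⟪A X, Z⟫ • A Y ∈ D)
    (X₁ : E) (hX₁ : X₁ ∈ D) (hX₁norm : ‖X₁‖ = 1)
    (l₁ : ℝ) (hl₁ : l₁ ≠ 0) (hV₁ : A X₁ - l₁ • X₁ ∈ Dᗮ)
    (hAX₁ : A X₁ ∉ D) :
    (∀ W ∈ D, ⟪W, X₁⟫ = 0 → A W = 0) ∧
      (∀ W : E, W ∈ D ⊓ LinearMap.ker A ↔ W ∈ D ∧ ⟪W, X₁⟫ = 0) :=
  gauss_invariant_kernel_general A hA D hGauss X₁ hX₁ hX₁norm l₁ hl₁ hV₁ hAX₁
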